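/- Let n ≥ 1 and let P be an n×n complex matrix satisfying P² = I. Let Z = diag(1, −1) and let m = (1/√2)(e₀ + e^{iπ/4} e₁) ∈ ℂ² be the magic state. For any v ∈ ℂⁿ, let w⁻ = (1/2)(I_{2n} − P ⊗ Z)(v ⊗ m) ∈ ℂⁿ ⊗ ℂ² (the post-measurement state for outcome −1 of measuring P ⊗ Z), and define u⁻ ∈ ℂⁿ by u⁻_i = (w⁻_{(i,0)} + w⁻_{(i,1)})/√2. Then applying the Clifford correction e^{−iπP/4} = cos(π/4) · I − i sin(π/4) · P gives (cos(π/4) I − i sin(π/4) P) u⁻ = (e^{iπ/8}/2) · (cos(π/8) · v − i · sin(π/8) · (P v)); that is, after the outcome-conditioned π/4 correction, the data register again carries e^{−iπP/8} v up to normalization and a global phase. -/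

import Mathlib

/-!
Since `Z` is diagonal, `(1 - P ⊗ Z) / 2` sends `v ⊗ m` to
`((v - P v) ⊗ m₀ e₀ + (v + P v) ⊗ m₁ e₁) / 2`, so reading out the ancilla leaves `A v + B P v` with `A = (1 + ω) / 4`, `B = (ω - 1) / 4` and
`ω = e^{iπ/4}`. As `P² = 1`, the correction `cos φ - i sin φ P` preserves the span of `v` and `P v`;
for `e^{iφ} = ω` it turns the coefficients into `(1 + ω) / 4 = e^{iπ/8} cos (π/8) / 2` and
`(1 - ω) / 4 = -i e^{iπ/8} sin (π/8) / 2`.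
-/

open Matrix Kronecker

namespace Matrix

variable {R ι κ : Type*} [Fintype ι] [Fintype κ]

theorem kronecker_mulVec_mul [CommSemiring R] (A : Matrix ι ι R) (B : Matrix κ κ R)
    (v : ι → R) (w : κ → R) :
    (A ⊗ₖ B) *ᵥ (fun q => v q.1 * w q.2) = fun q => (A *ᵥ v) q.1 * (B *ᵥ w) q.2 := by
  funext q
  simp only [mulVec, dotProduct, Fintype.sum_prod_type, kroneckerMap_apply, Finset.sum_mul_sum]
  exact Finset.sum_congr rfl fun _ _ => Finset.sum_congr rfl fun _ _ => by ring

variable [DecidableEq ι]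

theorem smul_one_sub_smul_mulVec_of_mul_self_eq_one [CommRing R] {P : Matrix ι ι R}
    (hP : P * P = 1) (c d a b : R) (v : ι → R) :
    (c • (1 : Matrix ι ι R) - d • P) *ᵥ (a • v + b • P *ᵥ v)
      = (c * a - d * b) • v + (c * b - d * a) • P *ᵥ v := by
  rw [sub_mulVec, smul_mulVec, smul_mulVec, one_mulVec, mulVec_add, mulVec_smul, mulVec_smul,
    mulVec_mulVec, hP, one_mulVec]
  module

theorem ancilla_sum_div_of_half_one_sub_kronecker_pauliZ [Field R] (P : Matrix ι ι R)
    (v : ι → R) (m : Fin 2 → R) (r : R) {w : ι × Fin 2 → R}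
    (hw : w = ((1 : R) / 2) • ((1 : Matrix (ι × Fin 2) (ι × Fin 2) R) - P ⊗ₖ !![1, 0; 0, -1])
      *ᵥ fun q => v q.1 * m q.2) :
    (fun i => (w (i, 0) + w (i, 1)) / r)
      = ((m 0 + m 1) / (2 * r)) • v + ((m 1 - m 0) / (2 * r)) • P *ᵥ v := by
  subst hw
  funext i
  simp only [sub_mulVec, one_mulVec, kronecker_mulVec_mul, Pi.smul_apply,
    Pi.sub_apply, Pi.add_apply, smul_eq_mul]
  simp only [mulVec, dotProduct, of_apply, cons_val', cons_val_fin_one, cons_val_zero,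
    cons_val_one, Fin.sum_univ_two, one_mul, zero_mul, add_zero, zero_add, neg_mul, mul_neg,
    sub_neg_eq_add]
  ring

end Matrix

namespace Complex

theorem exp_mul_I_mul_exp_neg_mul_I (θ : ℂ) : exp (θ * I) * exp (-θ * I) = 1 := by
  rw [← exp_add, neg_mul, add_neg_cancel, exp_zero]

theorem exp_mul_I_mul_cos (θ : ℂ) : exp (θ * I) * cos θ = (1 + exp (2 * θ * I)) / 2 := by
  rw [cos, show 2 * θ * I = θ * I + θ * I by ring, exp_add]
  linear_combination (1 / 2 : ℂ) * exp_mul_I_mul_exp_neg_mul_I θ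

theorem neg_I_mul_exp_mul_I_mul_sin (θ : ℂ) :
    -I * exp (θ * I) * sin θ = (1 - exp (2 * θ * I)) / 2 := by
  rw [sin, show 2 * θ * I = θ * I + θ * I by ring, exp_add]
  linear_combination (1 / 2 : ℂ) * exp_mul_I_mul_exp_neg_mul_I θ
    + (exp (θ * I) ^ 2 - exp (θ * I) * exp (-θ * I)) / 2 * I_sq

theorem cos_mul_one_add_exp_sub (φ : ℂ) :
    cos φ * (1 + exp (φ * I)) - I * sin φ * (exp (φ * I) - 1) = 1 + exp (φ * I) := by
  rw [exp_mul_I]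
  linear_combination (sin_sq_add_cos_sq φ) - sin φ ^ 2 * I_sq

theorem cos_mul_exp_sub_one_sub (φ : ℂ) :
    cos φ * (exp (φ * I) - 1) - I * sin φ * (1 + exp (φ * I)) = 1 - exp (φ * I) := by
  rw [exp_mul_I]
  linear_combination (sin_sq_add_cos_sq φ) - sin φ ^ 2 * I_sq

theorem exp_mul_I_div_two_mul_cos_eq (θ : ℂ) :
    exp (θ * I) / 2 * cos θ
      = cos (2 * θ) * ((1 + exp (2 * θ * I)) / 4)
        - I * sin (2 * θ) * ((exp (2 * θ * I) - 1) / 4) := by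
  linear_combination exp_mul_I_mul_cos θ / 2 - cos_mul_one_add_exp_sub (2 * θ) / 4

theorem exp_mul_I_div_two_mul_neg_I_mul_sin_eq (θ : ℂ) :
    exp (θ * I) / 2 * (-I * sin θ)
      = cos (2 * θ) * ((exp (2 * θ * I) - 1) / 4)
        - I * sin (2 * θ) * ((1 + exp (2 * θ * I)) / 4) := by
  linear_combination neg_I_mul_exp_mul_I_mul_sin θ / 2 - cos_mul_exp_sub_one_sub (2 * θ) / 4

end Complex

open Complex in
theorem magic_state_rotation_minus_outcome_general
    (n : ℕ) (P : Matrix (Fin n) (Fin n) ℂ) (hP : P * P = 1)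
    (v : Fin n → ℂ) :
    let Z : Matrix (Fin 2) (Fin 2) ℂ := !![1, 0; 0, -1]
    let m : Fin 2 → ℂ :=
      ![(Real.sqrt 2 : ℂ)⁻¹, Complex.exp (Real.pi / 4 * Complex.I) * (Real.sqrt 2 : ℂ)⁻¹]
    let vm : Fin n × Fin 2 → ℂ := fun q => v q.1 * m q.2
    let wminus : Fin n × Fin 2 → ℂ :=
      ((1 : ℂ) / 2) • ((1 : Matrix (Fin n × Fin 2) (Fin n × Fin 2) ℂ) - P ⊗ₖ Z).mulVec vm
    let uminus : Fin n → ℂ := fun i => (wminus (i, 0) + wminus (i, 1)) / (Real.sqrt 2 : ℂ)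
    let correction : Matrix (Fin n) (Fin n) ℂ :=
      (Real.cos (Real.pi / 4) : ℂ) • (1 : Matrix (Fin n) (Fin n) ℂ)
        - (Complex.I * (Real.sin (Real.pi / 4) : ℂ)) • P
    ∀ i, correction.mulVec uminus i = Complex.exp (Real.pi / 8 * Complex.I) / 2 *
      ((Real.cos (Real.pi / 8) : ℂ) * v i
        - Complex.I * (Real.sin (Real.pi / 8) : ℂ) * P.mulVec v i) := by
  intro Z m vm wminus uminus correction i
  set ω := exp (Real.pi / 4 * I)
  have hquarter : (Real.sqrt 2 : ℂ)⁻¹ / (2 * Real.sqrt 2) = 1 / 4 := by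
    have hsqrt : (Real.sqrt 2 : ℂ) * Real.sqrt 2 = 2 := by
      exact_mod_cast Real.mul_self_sqrt zero_le_two
    field_simp
    linear_combination -2 * hsqrt
  have hm0 : m 0 = (Real.sqrt 2 : ℂ)⁻¹ := rfl
  have hm1 : m 1 = ω * (Real.sqrt 2 : ℂ)⁻¹ := rfl
  have hu : uminus = ((1 + ω) / 4) • v + ((ω - 1) / 4) • P *ᵥ v := by
    rw [show uminus = _ from ancilla_sum_div_of_half_one_sub_kronecker_pauliZ P v m _ rfl, hm0, hm1]
    congr 2
    · linear_combination (1 + ω) * hquarter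
    · linear_combination (ω - 1) * hquarter
  have hcos := exp_mul_I_div_two_mul_cos_eq (Real.pi / 8)
  have hsin := exp_mul_I_div_two_mul_neg_I_mul_sin_eq (Real.pi / 8)
  rw [show 2 * (Real.pi / 8 : ℂ) = Real.pi / 4 by ring] at hcos hsin
  rw [hu, show correction *ᵥ _ = _ from smul_one_sub_smul_mulVec_of_mul_self_eq_one hP _ _ _ _ v]
  simp only [Pi.add_apply, Pi.smul_apply, smul_eq_mul]
  push_cast
  linear_combination -(v i * hcos + (P *ᵥ v) i * hsin)

/-- Correctness of the −1-outcome branch of the circuit implementing the π/8 Pauli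
rotation via measurement of `P ⊗ Z` with a magic-state ancilla, followed by the
measurement-outcome-controlled Clifford correction `e^{−iπP/4}`. -/
theorem magic_state_rotation_minus_outcome
    (n : ℕ) (hn : 1 ≤ n) (P : Matrix (Fin n) (Fin n) ℂ) (hP : P * P = 1)
    (v : Fin n → ℂ) :
    let Z : Matrix (Fin 2) (Fin 2) ℂ := !![1, 0; 0, -1]
    let m : Fin 2 → ℂ :=
      ![(Real.sqrt 2 : ℂ)⁻¹, Complex.exp (Real.pi / 4 * Complex.I) * (Real.sqrt 2 : ℂ)⁻¹]
    let vm : Fin n × Fin 2 → ℂ := fun q => v q.1 * m q.2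
    let wminus : Fin n × Fin 2 → ℂ :=
      ((1 : ℂ) / 2) • ((1 : Matrix (Fin n × Fin 2) (Fin n × Fin 2) ℂ) - P ⊗ₖ Z).mulVec vm
    let uminus : Fin n → ℂ := fun i => (wminus (i, 0) + wminus (i, 1)) / (Real.sqrt 2 : ℂ)
    let correction : Matrix (Fin n) (Fin n) ℂ :=
      (Real.cos (Real.pi / 4) : ℂ) • (1 : Matrix (Fin n) (Fin n) ℂ)
        - (Complex.I * (Real.sin (Real.pi / 4) : ℂ)) • P
    ∀ i, correction.mulVec uminus i = Complex.exp (Real.pi / 8 * Complex.I) / 2 *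
      ((Real.cos (Real.pi / 8) : ℂ) * v i
        - Complex.I * (Real.sin (Real.pi / 8) : ℂ) * P.mulVec v i) :=
  magic_state_rotation_minus_outcome_general n P hP v
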